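/- arXiv:2405.10742 — 2 statements merged into one kernel-verified Lean document; each statement's English description precedes it below -/
import Mathlib

section
/- Let n be a positive integer and a > 1 be such that n/a is a positive integer, and let p > 0 satisfy a·p ≤ 1. Then for every real x with 0 ≤ x ≤ n·p − 1, F_{n,p}(x) > F_{n/a, a·p}(x). -/
/-!
Put `λ = n p`, so that `p = λ / n` and `a p = λ / m` with `λ ≤ m < n`. For an integer
`k ≤ λ - 1` the map `j ↦ F_{j, λ/j}(k)` is strictly increasing on `j ≥ λ`, which gives the
theorem at `k = ⌊x⌋`.

To compare `j` with `j + 1`, let `q = λ / j` and `q' = λ / (j + 1)`. The Bernstein polynomial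
identities give `F_{j+1,q}(k) = F_{j,q}(k) - q b_{j,q}(k)` and
`d/ds F_{j+1,s}(k) = -(j + 1) b_{j,s}(k)`, where `b` is the binomial pmf. As `s ↦ b_{j,s}(k)` is
strictly decreasing on `[k/j, 1] ⊇ [q', q]`, the mean value theorem yields
`F_{j+1,q'}(k) - F_{j+1,q}(k) > (j + 1)(q - q') b_{j,q}(k) = q b_{j,q}(k)`.
-/

/-- The probability mass function of the Binomial(n, p) distribution. -/
noncomputable def binomPMF (n : ℕ) (p : ℝ) (k : ℕ) : ℝ :=
  (n.choose k : ℝ) * p ^ k * (1 - p) ^ (n - k)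

/-- The cumulative distribution function of the Binomial(n, p) distribution,
`F_{n,p}(x) = P(Bin(n,p) ≤ x)`. -/
noncomputable def binomCDF (n : ℕ) (p : ℝ) (x : ℝ) : ℝ :=
  ∑ k ∈ Finset.range (n + 1), if (k : ℝ) ≤ x then binomPMF n p k else 0

/-- The quantile function `F_{n,p}⁻¹(u) = inf {x : F_{n,p}(x) ≥ u}`. -/
noncomputable def binomQuantile (n : ℕ) (p : ℝ) (u : ℝ) : ℝ :=
  sInf {x : ℝ | u ≤ binomCDF n p x}

open Finset Polynomial

namespace bernsteinPolynomial

variable {R : Type*} [CommRing R]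

theorem succ_succ (n ν : ℕ) :
    bernsteinPolynomial R (n + 1) (ν + 1) =
      X * bernsteinPolynomial R n ν + (1 - X) * bernsteinPolynomial R n (ν + 1) := by
  simp only [bernsteinPolynomial, Nat.choose_succ_succ', Nat.cast_add, Nat.add_sub_add_right]
  rcases lt_or_ge ν n with hν | hν
  · rw [show n - ν = n - (ν + 1) + 1 by omega]
    ring
  · rw [Nat.choose_eq_zero_of_lt (by omega : n < ν + 1)]
    ring

theorem sum_range_succ_left (n k : ℕ) :
    ∑ i ∈ range (k + 1), bernsteinPolynomial R (n + 1) i =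
      ∑ i ∈ range (k + 1), bernsteinPolynomial R n i - X * bernsteinPolynomial R n k := by
  induction k with
  | zero =>
    simp only [zero_add, range_one, sum_singleton, bernsteinPolynomial, Nat.choose_zero_right,
      Nat.cast_one, one_mul, pow_zero, Nat.sub_zero, pow_succ]
    ring
  | succ k ih =>
    rw [sum_range_succ, ih, succ_succ, sum_range_succ _ (k + 1)]
    ring

theorem derivative_sum_range (n k : ℕ) :
    derivative (∑ i ∈ range (k + 1), bernsteinPolynomial R (n + 1) i) =
      -((n + 1) * bernsteinPolynomial R n k) := by
  induction k with
  | zero =>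
    simp only [zero_add, range_one, sum_singleton, derivative_zero]
    push_cast
    ring
  | succ k ih =>
    rw [sum_range_succ, derivative_add, ih, derivative_succ]
    push_cast
    ring

end bernsteinPolynomial

theorem binomPMF_eq_eval_bernsteinPolynomial (n k : ℕ) (p : ℝ) :
    binomPMF n p k = (bernsteinPolynomial ℝ n k).eval p := by
  simp [binomPMF, bernsteinPolynomial]

theorem binomCDF_natCast (n k : ℕ) (p : ℝ) :
    binomCDF n p k = ∑ i ∈ range (k + 1), binomPMF n p i := by
  rw [binomCDF, ← sum_filter]
  refine sum_subset (fun i => by simp) fun i hik hi => ?_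
  have hni : n < i := by simp only [mem_range, mem_filter, Nat.cast_le, not_and, not_le] at hik hi; omega
  simp [binomPMF, Nat.choose_eq_zero_of_lt hni]

theorem binomCDF_floor (n : ℕ) (p : ℝ) {x : ℝ} (hx : 0 ≤ x) :
    binomCDF n p ⌊x⌋₊ = binomCDF n p x := by
  unfold binomCDF
  congr! 2 with i
  rw [Nat.cast_le, Nat.le_floor_iff hx]

theorem binomCDF_natCast_eq_eval (n k : ℕ) (p : ℝ) :
    binomCDF n p k = (∑ i ∈ range (k + 1), bernsteinPolynomial ℝ n i).eval p := by
  simp [binomCDF_natCast, eval_finsetSum, binomPMF_eq_eval_bernsteinPolynomial]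

theorem binomCDF_succ (n k : ℕ) (p : ℝ) :
    binomCDF (n + 1) p k = binomCDF n p k - p * binomPMF n p k := by
  simp [binomCDF_natCast_eq_eval, bernsteinPolynomial.sum_range_succ_left,
    binomPMF_eq_eval_bernsteinPolynomial]

theorem hasDerivAt_binomCDF_succ (n k : ℕ) (t : ℝ) :
    HasDerivAt (fun s => binomCDF (n + 1) s k) (-((n + 1) * binomPMF n t k)) t := by
  have h := Polynomial.hasDerivAt (∑ i ∈ range (k + 1), bernsteinPolynomial ℝ (n + 1) i) t
  rw [bernsteinPolynomial.derivative_sum_range] at h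
  simpa [binomCDF_natCast_eq_eval, binomPMF_eq_eval_bernsteinPolynomial] using h

theorem strictAntiOn_pow_mul_one_sub_pow (k r : ℕ) (hr : r ≠ 0) :
    StrictAntiOn (fun s : ℝ => s ^ k * (1 - s) ^ r) (Set.Icc (k / (k + r)) 1) := by
  obtain ⟨r, rfl⟩ : ∃ r', r = r' + 1 := ⟨r - 1, by omega⟩
  refine strictAntiOn_of_deriv_neg (convex_Icc _ _) (by fun_prop) fun s hs => ?_
  rw [interior_Icc, Set.mem_Ioo, div_lt_iff₀ (by positivity)] at hs
  obtain ⟨hks, hs1⟩ := hs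
  have hs0 : 0 < s := by nlinarith
  have hderiv : HasDerivAt (fun s : ℝ => s ^ k * (1 - s) ^ (r + 1))
      (k * s ^ (k - 1) * (1 - s) ^ (r + 1) - (r + 1) * s ^ k * (1 - s) ^ r) s := by
    refine ((hasDerivAt_pow k s).mul
      ((hasDerivAt_pow (r + 1) (1 - s)).comp s ((hasDerivAt_id s).const_sub 1))).congr_deriv ?_
    simp only [Function.comp_apply, Nat.cast_add, Nat.cast_one, add_tsub_cancel_right, mul_neg,
      mul_one]
    ring
  rw [hderiv.deriv]
  rcases k with _ | k
  · have : 0 < (1 - s) ^ r := pow_pos (by linarith) r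
    simp only [CharP.cast_eq_zero, zero_mul, zero_sub, pow_zero, mul_one, Left.neg_neg_iff]
    positivity
  · calc _ = s ^ k * (1 - s) ^ r * ((k + 1) - (k + 1 + (r + 1)) * s) := by
          simp only [Nat.cast_add, Nat.cast_one, add_tsub_cancel_right]
          ring
      _ < 0 := by
          have := sub_pos.2 hs1
          exact mul_neg_of_pos_of_neg (by positivity) (by push_cast at hks; linarith)

theorem strictAntiOn_binomPMF {n k : ℕ} (hkn : k < n) :
    StrictAntiOn (fun s => binomPMF n s k) (Set.Icc (k / n) 1) := by
  have h := strictAntiOn_pow_mul_one_sub_pow k (n - k) (by omega)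
  rw [Nat.cast_sub hkn.le, add_sub_cancel] at h
  have hc : (0 : ℝ) < n.choose k := by exact_mod_cast Nat.choose_pos hkn.le
  intro s hs t ht hst
  simpa only [binomPMF, mul_assoc] using mul_lt_mul_of_pos_left (h hs ht hst) hc

theorem mul_sub_lt_binomCDF_succ_sub {j k : ℕ} {q q' : ℝ} (hkj : k < j) (hq' : k / j ≤ q')
    (hq'q : q' < q) (hq : q ≤ 1) :
    (j + 1) * binomPMF j q k * (q - q') < binomCDF (j + 1) q' k - binomCDF (j + 1) q k := by
  have hderiv (s : ℝ) :
      HasDerivAt (fun t => -binomCDF (j + 1) t k) ((j + 1) * binomPMF j s k) s :=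
    (hasDerivAt_binomCDF_succ j k s).neg.congr_deriv (neg_neg _)
  have hlt_deriv : ∀ s ∈ interior (Set.Icc q' q),
      (j + 1) * binomPMF j q k < deriv (fun s => -binomCDF (j + 1) s k) s := by
    intro s hs
    rw [interior_Icc] at hs
    rw [(hderiv s).deriv]
    have hpmf := strictAntiOn_binomPMF hkj ⟨hq'.trans hs.1.le, hs.2.le.trans hq⟩
      ⟨hq'.trans hq'q.le, hq⟩ hs.2
    gcongr
  have := (convex_Icc q' q).mul_sub_lt_image_sub_of_lt_deriv
    (fun s _ => (hderiv s).continuousAt.continuousWithinAt)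
    (fun s _ => (hderiv s).differentiableAt.differentiableWithinAt) hlt_deriv
    q' ⟨le_rfl, hq'q.le⟩ q ⟨hq'q.le, le_rfl⟩ hq'q
  linarith

theorem binomCDF_div_lt_binomCDF_succ_div {j k : ℕ} {lam : ℝ} (hk : k + 1 ≤ lam)
    (hj : lam ≤ j) : binomCDF j (lam / j) k < binomCDF (j + 1) (lam / (j + 1)) k := by
  have hj0 : (0 : ℝ) < j := by linarith [k.cast_nonneg (α := ℝ)]
  have hkj : k < j := by exact_mod_cast (by linarith : (k : ℝ) < j)
  have hq'q : lam / (j + 1) < lam / j := div_lt_div_of_pos_left (by linarith) hj0 (by linarith)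
  have hq : lam / j ≤ 1 := div_le_one_of_le₀ hj hj0.le
  have hkq' : k / j ≤ lam / (j + 1) := by
    rw [div_le_div_iff₀ hj0 (by positivity)]
    nlinarith
  have hscale : (j + 1) * (lam / j - lam / (j + 1)) = lam / j := by
    field_simp
    ring
  have h := mul_sub_lt_binomCDF_succ_sub hkj hkq' hq'q hq
  rw [binomCDF_succ j k (lam / j), mul_right_comm, hscale] at h
  linarith

theorem binomCDF_div_lt_of_lt {k m n : ℕ} {lam : ℝ} (hk : k + 1 ≤ lam) (hm : lam ≤ m)
    (hmn : m < n) : binomCDF m (lam / m) k < binomCDF n (lam / n) k :=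
  Nat.rel_of_forall_rel_succ_of_le_of_lt (· < ·) (f := fun j => binomCDF j (lam / j) k)
    (fun j hj => by
      simpa using binomCDF_div_lt_binomCDF_succ_div hk (hm.trans (by exact_mod_cast hj)))
    le_rfl hmn

theorem binomCDF_gt_of_concentrated_below_general
    (n m : ℕ) (a : ℝ) (ha : 1 < a)
    (hna : (n : ℝ) = a * m)
    (p : ℝ) (hap : a * p ≤ 1) :
    ∀ x : ℝ, 0 ≤ x → x ≤ (n : ℝ) * p - 1 → binomCDF n p x > binomCDF m (a * p) x := by
  intro x hx0 hx1
  have hk : (⌊x⌋₊ : ℝ) + 1 ≤ n * p := by linarith [Nat.floor_le hx0]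
  have hnp_le_m : (n : ℝ) * p ≤ m := by
    rw [hna, mul_right_comm, mul_comm (a * p)]
    exact mul_le_of_le_one_right m.cast_nonneg hap
  have hm0 : (0 : ℝ) < m := by linarith
  have hmn_real : (m : ℝ) < n := by nlinarith
  have hmn : m < n := by exact_mod_cast hmn_real
  have hp : n * p / n = p := mul_div_cancel_left₀ p (by linarith : (0 : ℝ) < n).ne'
  have hap' : n * p / m = a * p := by rw [hna]; field_simp
  have h := binomCDF_div_lt_of_lt hk hnp_le_m hmn
  rwa [hp, hap', binomCDF_floor n p hx0, binomCDF_floor m _ hx0] at h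

theorem binomCDF_gt_of_concentrated_below
    (n m : ℕ) (hn : 0 < n) (hm : 0 < m) (a : ℝ) (ha : 1 < a)
    (hna : (n : ℝ) = a * m)
    (p : ℝ) (hp : 0 < p) (hap : a * p ≤ 1) :
    ∀ x : ℝ, 0 ≤ x → x ≤ (n : ℝ) * p - 1 → binomCDF n p x > binomCDF m (a * p) x :=
  binomCDF_gt_of_concentrated_below_general n m a ha hna p hap
end

section
/- Let n be a positive integer and a ≥ 1 be such that n/a is a positive integer, and let p > 0 satisfy a·p ≤ 1. Then for every u with 1/2 + sqrt(1/(2·e·n·p·(1−p))) ≤ u ≤ 1, F_{n,p}^{-1}(u) ≥ F_{n/a, a·p}^{-1}(u). -/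
/-!
Put `μ = n p = m (a p)`. For a fixed mean `μ`, the map `N ↦ P(Bin(N, μ / N) ≤ j)` is
nonincreasing on `N ≥ μ` when `j ≥ μ`, and nondecreasing when `j + 1 ≤ μ` (Anderson–Samuels).
Indeed `∂ₚ P(Bin(N + 1, p) ≤ j) = -(N + 1) b(N, p, j)`, so together with Pascal's rule one step
`N → N + 1` reduces to comparing `b(N, ·, j)` on `[μ / (N + 1), μ / N]`, where it is monotone
since `p ↦ p ^ j (1 - p) ^ (N - j)` peaks at `j / N`. This gives `F_{n,p}(j) ≤ F_{m,ap}(j)` for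
all integers `j ≥ μ`.

Below the mean, the same monotonicity in `N`, anchored at the symmetric law `Bin(2k, 1/2)`,
together with the decrease of `F_{n,p}(j)` in `p`, gives `F_{n,p}(j) ≤ 1/2` whenever
`j + 1 ≤ μ`. For the one integer `j ∈ (μ - 1, μ)` this leaves `F_{n,p}(j) ≤ 1/2 + b(n, p, j)`,
and Stirling's formula with `stirlingSeq k ≥ √π` bounds `b(n, p, j) < (2 e n p (1 - p)) ^ (-1/2)`.
So `F_{n,p}(x) ≥ u` forces `⌊x⌋ ≥ μ`, whence `F_{m,ap}(x) ≥ F_{n,p}(x) ≥ u`.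
-/

open Finset Real Set

noncomputable def binomPartialSum (n : ℕ) (p : ℝ) (j : ℕ) : ℝ :=
  ∑ k ∈ range (j + 1), binomPMF n p k

section Basic

variable {n j k : ℕ} {p : ℝ}

theorem binomPMF_nonneg (hp0 : 0 ≤ p) (hp1 : p ≤ 1) (n k : ℕ) : 0 ≤ binomPMF n p k := by
  unfold binomPMF
  have : 0 ≤ 1 - p := by linarith
  positivity

theorem binomPMF_eq_zero_of_lt (h : n < k) (p : ℝ) : binomPMF n p k = 0 := by
  simp [binomPMF, Nat.choose_eq_zero_of_lt h]

theorem binomPMF_one_sub (hk : k ≤ n) (p : ℝ) :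
    binomPMF n (1 - p) k = binomPMF n p (n - k) := by
  rw [binomPMF, binomPMF, Nat.choose_symm hk, Nat.sub_sub_self hk, sub_sub_cancel]
  ring

theorem binomPMF_succ_succ (n k : ℕ) (p : ℝ) :
    binomPMF (n + 1) p (k + 1) = (1 - p) * binomPMF n p (k + 1) + p * binomPMF n p k := by
  simp only [binomPMF, Nat.choose_succ_succ', Nat.add_sub_add_right, Nat.cast_add]
  rcases lt_or_ge k n with hkn | hnk
  · rw [show n - k = n - (k + 1) + 1 by omega]
    ring
  · rw [Nat.choose_eq_zero_of_lt (Nat.lt_succ_of_le hnk), Nat.sub_eq_zero_of_le hnk, Nat.cast_zero]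
    ring

theorem sum_range_binomPMF (n : ℕ) (p : ℝ) : ∑ k ∈ range (n + 1), binomPMF n p k = 1 := by
  have := (add_pow p (1 - p) n).symm
  simp only [add_sub_cancel, one_pow] at this
  rw [← this]
  exact sum_congr rfl fun k _ => by rw [binomPMF]; ring

theorem binomPartialSum_mono (hp0 : 0 ≤ p) (hp1 : p ≤ 1) : Monotone (binomPartialSum n p) :=
  fun _ _ hij => sum_le_sum_of_subset_of_nonneg (range_subset_range.2 (by omega))
    fun k _ _ => binomPMF_nonneg hp0 hp1 n k

theorem binomPartialSum_eq_one_of_le (h : n ≤ j) (p : ℝ) : binomPartialSum n p j = 1 := by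
  rw [binomPartialSum, ← sum_range_binomPMF n p]
  refine (sum_subset (range_subset_range.2 (by omega)) fun k hk hkn => ?_).symm
  exact binomPMF_eq_zero_of_lt (by simp only [Finset.mem_range, not_lt] at hk hkn; omega) p

theorem binomPartialSum_le_one (hp0 : 0 ≤ p) (hp1 : p ≤ 1) (j : ℕ) :
    binomPartialSum n p j ≤ 1 :=
  (binomPartialSum_mono hp0 hp1 (le_max_left j n)).trans_eq
    (binomPartialSum_eq_one_of_le (le_max_right j n) p)

theorem binomPartialSum_succ (n j : ℕ) (p : ℝ) :
    binomPartialSum (n + 1) p j = binomPartialSum n p j - p * binomPMF n p j := by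
  induction j with
  | zero =>
    simp only [binomPartialSum, zero_add, range_one, sum_singleton, binomPMF,
      Nat.choose_zero_right, Nat.sub_zero]
    ring
  | succ j ih =>
    simp only [binomPartialSum, sum_range_succ] at ih ⊢
    rw [ih, binomPMF_succ_succ]
    ring

theorem binomPartialSum_add_binomPartialSum_one_sub {i : ℕ} (h : j + i + 1 = n) (p : ℝ) :
    binomPartialSum n p j + binomPartialSum n (1 - p) i = 1 := by
  have hsym : binomPartialSum n (1 - p) i = ∑ k ∈ Ico (j + 1) (n + 1), binomPMF n p k := by
    rw [binomPartialSum, range_eq_Ico, sum_congr rfl fun k hk => binomPMF_one_sub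
      (by rw [Finset.mem_Ico] at hk; omega) p, sum_Ico_reflect _ _ (by omega),
      show n + 1 - (i + 1) = j + 1 by omega, Nat.sub_zero]
  rw [hsym, binomPartialSum, sum_range_add_sum_Ico _ (by omega), sum_range_binomPMF]

theorem binomCDF_eq_zero_of_neg {x : ℝ} (hx : x < 0) (n : ℕ) (p : ℝ) : binomCDF n p x = 0 :=
  sum_eq_zero fun k _ => if_neg (by have := k.cast_nonneg (α := ℝ); linarith)

theorem binomCDF_eq_binomPartialSum_floor {x : ℝ} (hx : 0 ≤ x) (n : ℕ) (p : ℝ) :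
    binomCDF n p x = binomPartialSum n p ⌊x⌋₊ := by
  simp_rw [binomCDF, ← Nat.le_floor_iff hx, ← sum_filter, binomPartialSum]
  refine sum_subset (fun k hk => by simp only [mem_filter, Finset.mem_range] at hk ⊢; omega)
    fun k hk hkn => ?_
  simp only [Finset.mem_range, mem_filter, not_and, not_le] at hk hkn
  exact binomPMF_eq_zero_of_lt (by omega) p

end Basic

theorem hasDerivAt_pow_mul_one_sub_pow (a b : ℕ) (x : ℝ) :
    HasDerivAt (fun t : ℝ => t ^ a * (1 - t) ^ b)
      (a * x ^ (a - 1) * (1 - x) ^ b - b * x ^ a * (1 - x) ^ (b - 1)) x :=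
  ((hasDerivAt_pow a x).mul ((hasDerivAt_pow b (1 - x)).comp x
    ((hasDerivAt_id x).const_sub 1))).congr_deriv (by rw [Function.comp_apply]; ring)

theorem pow_mul_one_sub_pow_deriv_mul (a b : ℕ) (x : ℝ) :
    (a * x ^ (a - 1) * (1 - x) ^ b - b * x ^ a * (1 - x) ^ (b - 1)) * (x * (1 - x)) =
      x ^ a * (1 - x) ^ b * (a - (a + b) * x) := by
  rcases a with _ | a <;> rcases b with _ | b <;>
    simp only [Nat.cast_zero, Nat.cast_succ, Nat.add_sub_cancel, Nat.zero_sub, pow_zero] <;> ring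

theorem pow_mul_one_sub_pow_monotoneOn (a b : ℕ) :
    MonotoneOn (fun t : ℝ => t ^ a * (1 - t) ^ b) (Icc 0 (a / (a + b))) := by
  refine monotoneOn_of_deriv_nonneg (convex_Icc _ _) (by fun_prop)
    (fun x _ => (hasDerivAt_pow_mul_one_sub_pow a b x).differentiableAt.differentiableWithinAt)
    fun x hx => ?_
  rw [interior_Icc] at hx
  obtain ⟨hx0, hxa⟩ := hx
  have hab : (0 : ℝ) < a + b := by
    rcases (show (0 : ℝ) ≤ a + b by positivity).eq_or_lt with hab | hab
    · rw [← hab, div_zero] at hxa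
      linarith
    · exact hab
  have hx1 : x < 1 := hxa.trans_le (div_le_one_of_le₀ (by simp) hab.le)
  have hsign : 0 ≤ (a : ℝ) - (a + b) * x := by
    rw [lt_div_iff₀ hab] at hxa; linarith
  rw [(hasDerivAt_pow_mul_one_sub_pow a b x).deriv]
  refine nonneg_of_mul_nonneg_left ?_ (mul_pos hx0 (sub_pos.2 hx1))
  rw [pow_mul_one_sub_pow_deriv_mul]
  have := sub_pos.2 hx1
  positivity

theorem pow_mul_one_sub_pow_antitoneOn (a b : ℕ) :
    AntitoneOn (fun t : ℝ => t ^ a * (1 - t) ^ b) (Icc (a / (a + b)) 1) := by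
  refine antitoneOn_of_deriv_nonpos (convex_Icc _ _) (by fun_prop)
    (fun x _ => (hasDerivAt_pow_mul_one_sub_pow a b x).differentiableAt.differentiableWithinAt)
    fun x hx => ?_
  rw [interior_Icc] at hx
  obtain ⟨hax, hx1⟩ := hx
  have hx0 : 0 < x := lt_of_le_of_lt (by positivity) hax
  have hsign : (a : ℝ) - (a + b) * x ≤ 0 := by
    rcases (show (0 : ℝ) ≤ a + b by positivity).eq_or_lt with hab | hab
    · nlinarith
    · rw [div_lt_iff₀ hab] at hax
      linarith
  rw [(hasDerivAt_pow_mul_one_sub_pow a b x).deriv]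
  refine nonpos_of_mul_nonpos_left ?_ (mul_pos hx0 (sub_pos.2 hx1))
  rw [pow_mul_one_sub_pow_deriv_mul]
  have := sub_pos.2 hx1
  exact mul_nonpos_of_nonneg_of_nonpos (by positivity) hsign

theorem binomPMF_eq_choose_mul (n k : ℕ) (t : ℝ) :
    binomPMF n t k = n.choose k * (t ^ k * (1 - t) ^ (n - k)) :=
  mul_assoc _ _ _

theorem binomPMF_monotoneOn (n k : ℕ) :
    MonotoneOn (fun t => binomPMF n t k) (Icc 0 (k / n)) := by
  intro s hs t ht hst
  rcases lt_or_ge n k with hnk | hkn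
  · simp only [binomPMF_eq_zero_of_lt hnk, le_refl]
  have hmono := pow_mul_one_sub_pow_monotoneOn k (n - k)
  rw [Nat.cast_sub hkn, add_sub_cancel] at hmono
  simp only [binomPMF_eq_choose_mul]
  exact mul_le_mul_of_nonneg_left (hmono hs ht hst) (Nat.cast_nonneg _)

theorem binomPMF_antitoneOn (n k : ℕ) :
    AntitoneOn (fun t => binomPMF n t k) (Icc (k / n) 1) := by
  intro s hs t ht hst
  rcases lt_or_ge n k with hnk | hkn
  · simp only [binomPMF_eq_zero_of_lt hnk, le_refl]
  have hanti := pow_mul_one_sub_pow_antitoneOn k (n - k)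
  rw [Nat.cast_sub hkn, add_sub_cancel] at hanti
  simp only [binomPMF_eq_choose_mul]
  exact mul_le_mul_of_nonneg_left (hanti hs ht hst) (Nat.cast_nonneg _)

theorem hasDerivAt_binomPMF_succ_zero (n : ℕ) (x : ℝ) :
    HasDerivAt (fun t => binomPMF (n + 1) t 0) (-(n + 1) * binomPMF n x 0) x := by
  simp only [binomPMF_eq_choose_mul, Nat.sub_zero]
  refine ((hasDerivAt_pow_mul_one_sub_pow 0 (n + 1) x).const_mul _).congr_deriv ?_
  simp only [Nat.choose_zero_right, Nat.cast_one, Nat.cast_zero, Nat.add_sub_cancel, pow_zero]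
  push_cast
  ring

theorem hasDerivAt_binomPMF_succ_succ (n k : ℕ) (x : ℝ) :
    HasDerivAt (fun t => binomPMF (n + 1) t (k + 1))
      ((n + 1) * (binomPMF n x k - binomPMF n x (k + 1))) x := by
  simp only [binomPMF_eq_choose_mul, Nat.add_sub_add_right]
  refine ((hasDerivAt_pow_mul_one_sub_pow (k + 1) (n - k) x).const_mul _).congr_deriv ?_
  have h₁ : ((n + 1 : ℕ) : ℝ) * n.choose k = (n + 1).choose (k + 1) * (k + 1 : ℕ) := by
    exact_mod_cast Nat.add_one_mul_choose_eq n k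
  have h₂ : (n.choose (k + 1) : ℝ) * (n + 1 : ℕ) = (n + 1).choose (k + 1) * (n - k : ℕ) := by
    exact_mod_cast (Nat.choose_mul_succ_eq n (k + 1)).trans (by simp)
  rw [Nat.add_sub_cancel, ← Nat.sub_sub]
  push_cast at h₁ h₂ ⊢
  linear_combination (x ^ (k + 1) * (1 - x) ^ (n - k - 1)) * h₂ - (x ^ k * (1 - x) ^ (n - k)) * h₁

theorem hasDerivAt_binomPartialSum_succ (n j : ℕ) (x : ℝ) :
    HasDerivAt (fun t => binomPartialSum (n + 1) t j) (-(n + 1) * binomPMF n x j) x := by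
  induction j with
  | zero => simpa [binomPartialSum] using hasDerivAt_binomPMF_succ_zero n x
  | succ j ih =>
    simp only [binomPartialSum, sum_range_succ] at ih ⊢
    exact (ih.add (hasDerivAt_binomPMF_succ_succ n j x)).congr_deriv (by ring)

theorem binomPartialSum_antitoneOn (n j : ℕ) :
    AntitoneOn (fun p => binomPartialSum n p j) (Icc 0 1) := by
  rcases n with _ | n
  · intro s _ t _ _
    simp only [binomPartialSum_eq_one_of_le (Nat.zero_le j), le_refl]
  have hd := hasDerivAt_binomPartialSum_succ n j
  refine antitoneOn_of_deriv_nonpos (convex_Icc 0 1)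
    (fun x _ => (hd x).continuousAt.continuousWithinAt)
    (fun x _ => (hd x).differentiableAt.differentiableWithinAt) fun x hx => ?_
  rw [interior_Icc] at hx
  rw [(hd x).deriv]
  have := binomPMF_nonneg hx.1.le hx.2.le n j
  nlinarith

section AndersonSamuels

variable {N j : ℕ} {μ : ℝ}

theorem binomPartialSum_succ_le_of_binomPMF_le {s r : ℝ} (hsr : s ≤ r)
    (h : ∀ t ∈ Icc s r, binomPMF N t j ≤ binomPMF N r j) :
    binomPartialSum (N + 1) s j ≤
      binomPartialSum (N + 1) r j + (N + 1) * (r - s) * binomPMF N r j := by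
  have hd := hasDerivAt_binomPartialSum_succ N j
  have := (convex_Icc s r).mul_sub_le_image_sub_of_le_deriv
    (fun x _ => (hd x).continuousAt.continuousWithinAt)
    (fun x _ => (hd x).differentiableAt.differentiableWithinAt)
    (C := -(N + 1) * binomPMF N r j)
    (fun x hx => by
      rw [(hd x).deriv]
      have := h x (interior_subset hx)
      nlinarith)
    s (left_mem_Icc.2 hsr) r (right_mem_Icc.2 hsr) hsr
  linarith

theorem binomPartialSum_succ_ge_of_binomPMF_ge {s r : ℝ} (hsr : s ≤ r)
    (h : ∀ t ∈ Icc s r, binomPMF N r j ≤ binomPMF N t j) :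
    binomPartialSum (N + 1) r j + (N + 1) * (r - s) * binomPMF N r j ≤
      binomPartialSum (N + 1) s j := by
  have hd := hasDerivAt_binomPartialSum_succ N j
  have := (convex_Icc s r).image_sub_le_mul_sub_of_deriv_le
    (fun x _ => (hd x).continuousAt.continuousWithinAt)
    (fun x _ => (hd x).differentiableAt.differentiableWithinAt)
    (C := -(N + 1) * binomPMF N r j)
    (fun x hx => by
      rw [(hd x).deriv]
      have := h x (interior_subset hx)
      nlinarith)
    s (left_mem_Icc.2 hsr) r (right_mem_Icc.2 hsr) hsr
  linarith

theorem add_one_mul_div_sub_div_add_one (hN : (N : ℝ) ≠ 0) (μ : ℝ) :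
    ((N : ℝ) + 1) * (μ / N - μ / (N + 1)) = μ / N := by
  field_simp
  ring

theorem binomPartialSum_succ_div_le (hμ : 0 < μ) (hμN : μ ≤ N) (hμj : μ ≤ j) :
    binomPartialSum (N + 1) (μ / (N + 1)) j ≤ binomPartialSum N (μ / N) j := by
  have hN : (0 : ℝ) < N := hμ.trans_le hμN
  have hsr : μ / (N + 1) ≤ μ / N := div_le_div_of_nonneg_left hμ.le hN (by linarith)
  have hr : μ / N ≤ j / N := div_le_div_of_nonneg_right hμj hN.le
  have key := binomPartialSum_succ_le_of_binomPMF_le hsr fun t ht =>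
    binomPMF_monotoneOn N j ⟨(by positivity : (0 : ℝ) ≤ μ / (N + 1)).trans ht.1, ht.2.trans hr⟩
      ⟨by positivity, hr⟩ ht.2
  rw [binomPartialSum_succ N j (μ / N), add_one_mul_div_sub_div_add_one hN.ne' μ] at key
  linarith

theorem binomPartialSum_div_le_succ (hμN : μ ≤ N) (hjμ : j + 1 ≤ μ) :
    binomPartialSum N (μ / N) j ≤ binomPartialSum (N + 1) (μ / (N + 1)) j := by
  have hμ : 0 < μ := by linarith [j.cast_nonneg (α := ℝ)]
  have hN : (0 : ℝ) < N := hμ.trans_le hμN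
  have hsr : μ / (N + 1) ≤ μ / N := div_le_div_of_nonneg_left hμ.le hN (by linarith)
  have hr : μ / N ≤ 1 := (div_le_one hN).2 hμN
  have hs : j / N ≤ μ / (N + 1) := by
    rw [div_le_div_iff₀ hN (by linarith)]
    nlinarith [j.cast_nonneg (α := ℝ)]
  have key := binomPartialSum_succ_ge_of_binomPMF_ge hsr fun t ht =>
    binomPMF_antitoneOn N j ⟨hs.trans ht.1, ht.2.trans hr⟩ ⟨hs.trans hsr, hr⟩ ht.2
  rw [binomPartialSum_succ N j (μ / N), add_one_mul_div_sub_div_add_one hN.ne' μ] at key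
  linarith

theorem binomPartialSum_div_le_div_of_mean_le (hμ : 0 < μ) (hμj : μ ≤ j) {K M : ℕ}
    (hμK : μ ≤ K) (hKM : K ≤ M) :
    binomPartialSum M (μ / M) j ≤ binomPartialSum K (μ / K) j := by
  induction M, hKM using Nat.le_induction with
  | base => exact le_rfl
  | succ M hKM ih =>
    push_cast
    exact (binomPartialSum_succ_div_le hμ (hμK.trans (by exact_mod_cast hKM)) hμj).trans ih

theorem binomPartialSum_div_le_div_of_add_one_le_mean (hjμ : j + 1 ≤ μ) {K M : ℕ}
    (hμK : μ ≤ K) (hKM : K ≤ M) :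
    binomPartialSum K (μ / K) j ≤ binomPartialSum M (μ / M) j := by
  induction M, hKM using Nat.le_induction with
  | base => exact le_rfl
  | succ M hKM ih =>
    push_cast
    exact ih.trans (binomPartialSum_div_le_succ (hμK.trans (by exact_mod_cast hKM)) hjμ)

end AndersonSamuels

theorem binomPartialSum_half_add_binomPartialSum_half (k : ℕ) :
    binomPartialSum (2 * k + 2) (1 / 2) k + binomPartialSum (2 * k + 2) (1 / 2) (k + 1) = 1 := by
  have h := binomPartialSum_add_binomPartialSum_one_sub (n := 2 * k + 2) (j := k) (i := k + 1)
    (by ring) (1 / 2 : ℝ)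
  rwa [show (1 : ℝ) - 1 / 2 = 1 / 2 by norm_num] at h

theorem half_le_binomPartialSum_div_self {k N : ℕ} (hk : 0 < k) (hkN : k ≤ N) (hN : N ≤ 2 * k) :
    1 / 2 ≤ binomPartialSum N (k / N) k := by
  obtain ⟨k, rfl⟩ : ∃ k', k = k' + 1 := ⟨k - 1, by omega⟩
  have hchain := binomPartialSum_div_le_div_of_mean_le (μ := ((k + 1 : ℕ) : ℝ)) (j := k + 1)
    (by positivity) le_rfl (by exact_mod_cast hkN) hN
  have hhalf : ((k + 1 : ℕ) : ℝ) / ((2 * (k + 1) : ℕ) : ℝ) = 1 / 2 := by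
    push_cast
    field_simp
  rw [hhalf, show 2 * (k + 1) = 2 * k + 2 by ring] at hchain
  have hsym := binomPartialSum_half_add_binomPartialSum_half k
  have hmono := binomPartialSum_mono (n := 2 * k + 2) (p := 1 / 2) (by norm_num) (by norm_num)
    (Nat.le_succ k)
  linarith

theorem binomPartialSum_add_one_div_le_half {k N : ℕ} (hkN : k + 1 ≤ N) :
    binomPartialSum N ((k + 1) / N) k ≤ 1 / 2 := by
  have hN0 : (0 : ℝ) < N := by exact_mod_cast (show 0 < N by omega)
  rcases le_or_gt N (2 * k + 2) with hN | hN
  · have hchain := binomPartialSum_div_le_div_of_add_one_le_mean (μ := (k : ℝ) + 1) (j := k)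
      le_rfl (by exact_mod_cast hkN) hN
    have hhalf : ((k : ℝ) + 1) / ((2 * k + 2 : ℕ) : ℝ) = 1 / 2 := by
      push_cast
      field_simp
    rw [hhalf] at hchain
    have hsym := binomPartialSum_half_add_binomPartialSum_half k
    have hmono := binomPartialSum_mono (n := 2 * k + 2) (p := 1 / 2) (by norm_num) (by norm_num)
      (Nat.le_succ k)
    linarith
  · have hsym := binomPartialSum_add_binomPartialSum_one_sub (n := N) (j := k) (i := N - k - 1)
      (by omega) (((k : ℝ) + 1) / N)
    have hcompl : 1 - ((k : ℝ) + 1) / N = ((N - k - 1 : ℕ) : ℝ) / N := by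
      rw [Nat.cast_sub (by omega), Nat.cast_sub (by omega)]
      field_simp
      ring
    rw [hcompl] at hsym
    have := half_le_binomPartialSum_div_self (k := N - k - 1) (N := N) (by omega) (by omega)
      (by omega)
    linarith

theorem binomPartialSum_le_half {n j : ℕ} {p : ℝ} (hp1 : p ≤ 1) (hj : j + 1 ≤ n * p) :
    binomPartialSum n p j ≤ 1 / 2 := by
  have hn : (j : ℝ) + 1 ≤ n := hj.trans (by nlinarith [j.cast_nonneg (α := ℝ)])
  have hn0 : (0 : ℝ) < n := by linarith [j.cast_nonneg (α := ℝ)]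
  have hp : ((j : ℝ) + 1) / n ≤ p := by rwa [div_le_iff₀ hn0, mul_comm]
  calc binomPartialSum n p j ≤ binomPartialSum n (((j : ℝ) + 1) / n) j :=
        binomPartialSum_antitoneOn n j ⟨by positivity, hp.trans hp1⟩
          ⟨(by positivity : (0 : ℝ) ≤ _).trans hp, hp1⟩ hp
    _ ≤ 1 / 2 := binomPartialSum_add_one_div_le_half (by exact_mod_cast hn)

theorem one_add_pow_le_exp_mul {x : ℝ} (hx : -1 ≤ x) (n : ℕ) : (1 + x) ^ n ≤ exp (n * x) := by
  rw [exp_nat_mul]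
  exact pow_le_pow_left₀ (by linarith) (by linarith [add_one_le_exp x]) n

theorem one_sub_div_pow_lt_exp {t : ℝ} {M : ℕ} (ht : 0 < t) (htM : t ≤ M) :
    (1 - t / M) ^ (2 * M + 1) < exp (-2 * t) := by
  have hM : (0 : ℝ) < M := ht.trans_le htM
  calc (1 - t / M) ^ (2 * M + 1) = (1 + -(t / M)) ^ (2 * M + 1) := by ring
    _ ≤ exp ((2 * M + 1 : ℕ) * -(t / M)) :=
        one_add_pow_le_exp_mul (by rw [neg_le_neg_iff, div_le_one hM]; exact htM) _
    _ = exp (-2 * t - t / M) := by congr 1; push_cast; field_simp; ring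
    _ < exp (-2 * t) := exp_lt_exp.2 (by linarith [div_pos ht hM])

theorem exp_mul_one_add_div_pow_le {t : ℝ} {k : ℕ} (ht : 0 ≤ t) (hk : 0 < k) :
    exp (1 - 2 * t) * (1 + t / k) ^ (2 * k + 1) ≤ (1 + 1 / (2 * k)) ^ (2 * k + 1) := by
  have hk : (0 : ℝ) < k := by exact_mod_cast hk
  -- split `1 + t / k` at the maximiser `t = 1 / 2` of the left-hand side
  have hsplit : 1 + t / k = (1 + (t - 1 / 2) / (k + 1 / 2)) * (1 + 1 / (2 * k)) := by
    field_simp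
    ring
  have hx : -1 ≤ (t - 1 / 2) / (k + 1 / 2) := by
    rw [le_div_iff₀ (by linarith)]
    linarith
  have hexp : exp (1 - 2 * t) * exp ((2 * k + 1 : ℕ) * ((t - 1 / 2) / (k + 1 / 2))) = 1 := by
    rw [← exp_add, exp_eq_one_iff]
    push_cast
    field_simp
    ring
  calc exp (1 - 2 * t) * (1 + t / k) ^ (2 * k + 1)
      ≤ exp (1 - 2 * t) * (exp ((2 * k + 1 : ℕ) * ((t - 1 / 2) / (k + 1 / 2))) *
          (1 + 1 / (2 * k)) ^ (2 * k + 1)) := by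
        rw [hsplit, mul_pow]
        gcongr
        exact one_add_pow_le_exp_mul hx _
    _ = (1 + 1 / (2 * k)) ^ (2 * k + 1) := by rw [← mul_assoc, hexp, one_mul]

section LocalBound

open Nat Stirling

theorem factorial_sq_eq_stirlingSeq {n : ℕ} (hn : n ≠ 0) :
    (n ! : ℝ) ^ 2 = stirlingSeq n ^ 2 * (2 * n) * (n / exp 1) ^ (2 * n) := by
  have hn' : (0 : ℝ) < n := by exact_mod_cast Nat.pos_of_ne_zero hn
  rw [stirlingSeq, div_pow, mul_pow, sq_sqrt (by positivity), ← pow_mul, mul_comm n 2]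
  field_simp

theorem one_add_inv_two_mul_pow_le_stirlingSeq_sq {k : ℕ} (hk : 0 < k) :
    (1 + 1 / (2 * k)) ^ (2 * k + 1) ≤ stirlingSeq k ^ 2 := by
  rcases (show k = 1 ∨ 2 ≤ k by omega) with rfl | hk2
  · rw [stirlingSeq_one, div_pow, sq_sqrt zero_le_two]
    have he := exp_one_gt_d9
    nlinarith
  have hπ : π ≤ stirlingSeq k ^ 2 := by
    calc π = √π ^ 2 := (sq_sqrt pi_pos.le).symm
      _ ≤ _ := pow_le_pow_left₀ (sqrt_nonneg _) (sqrt_pi_le_stirlingSeq hk.ne') 2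
  refine le_trans ?_ hπ
  rcases (show k = 2 ∨ k = 3 ∨ 4 ≤ k by omega) with rfl | rfl | hk4
  · norm_num
    linarith [pi_gt_d2]
  · norm_num
    linarith [pi_gt_d2]
  have he : (1 + 1 / (2 * k : ℝ)) ^ (2 * k) ≤ exp 1 := by
    simpa using one_add_inv_pow_le_exp (n := 2 * k)
  have hk8 : 1 / (2 * k : ℝ) ≤ 1 / 8 := by
    rw [div_le_div_iff₀ (by positivity) (by norm_num)]
    norm_cast
    omega
  calc (1 + 1 / (2 * k : ℝ)) ^ (2 * k + 1)
      = (1 + 1 / (2 * k : ℝ)) ^ (2 * k) * (1 + 1 / (2 * k)) := pow_succ _ _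
    _ ≤ exp 1 * (1 + 1 / 8) := by gcongr
    _ ≤ π := by nlinarith [exp_one_lt_d9, pi_gt_d2]

theorem stirlingSeq_pos {n : ℕ} (hn : n ≠ 0) : 0 < stirlingSeq n :=
  (sqrt_pos.2 pi_pos).trans_le (sqrt_pi_le_stirlingSeq hn)

theorem binomPMF_sq_mul_eq {k M : ℕ} (hk : k ≠ 0) (hM : M ≠ 0) (p : ℝ) :
    binomPMF (k + M) p k ^ 2 * (2 * exp 1 * (k + M : ℕ) * p * (1 - p)) =
      (stirlingSeq (k + M) / stirlingSeq M) ^ 2 / stirlingSeq k ^ 2 *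
        (exp 1 * ((k + M : ℕ) * p / k) ^ (2 * k + 1) *
          ((k + M : ℕ) * (1 - p) / M) ^ (2 * M + 1)) := by
  have hk' : (k : ℝ) ≠ 0 := by exact_mod_cast hk
  have hM' : (M : ℝ) ≠ 0 := by exact_mod_cast hM
  have hsk := (stirlingSeq_pos hk).ne'
  have hsM := (stirlingSeq_pos hM).ne'
  have hsN := (stirlingSeq_pos (n := k + M) (by omega)).ne'
  rw [binomPMF, Nat.add_sub_cancel_left, Nat.cast_choose ℝ (Nat.le_add_right k M),
    Nat.add_sub_cancel_left, mul_pow, mul_pow, div_pow, mul_pow,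
    factorial_sq_eq_stirlingSeq hk, factorial_sq_eq_stirlingSeq hM,
    factorial_sq_eq_stirlingSeq (by omega : k + M ≠ 0)]
  push_cast
  simp only [div_pow, mul_pow]
  field_simp
  ring

theorem stirlingSeq_le_stirlingSeq {m n : ℕ} (hm : m ≠ 0) (hmn : m ≤ n) :
    stirlingSeq n ≤ stirlingSeq m := by
  obtain ⟨m, rfl⟩ : ∃ m', m = m' + 1 := ⟨m - 1, by omega⟩
  obtain ⟨n, rfl⟩ : ∃ n', n = n' + 1 := ⟨n - 1, by omega⟩
  exact stirlingSeq'_antitone (by omega : m ≤ n)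

theorem exp_one_mul_pow_mul_pow_lt_stirlingSeq_sq {t : ℝ} {k M : ℕ} (hk : 0 < k) (ht : 0 < t)
    (htM : t ≤ M) :
    exp 1 * (1 + t / k) ^ (2 * k + 1) * (1 - t / M) ^ (2 * M + 1) < stirlingSeq k ^ 2 :=
  calc exp 1 * (1 + t / k) ^ (2 * k + 1) * (1 - t / M) ^ (2 * M + 1)
      < exp 1 * (1 + t / k) ^ (2 * k + 1) * exp (-2 * t) := by
        gcongr
        exact one_sub_div_pow_lt_exp ht htM
    _ = exp (1 - 2 * t) * (1 + t / k) ^ (2 * k + 1) := by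
        rw [sub_eq_add_neg, exp_add, neg_mul]
        ring
    _ ≤ (1 + 1 / (2 * k)) ^ (2 * k + 1) := exp_mul_one_add_div_pow_le ht.le hk
    _ ≤ stirlingSeq k ^ 2 := one_add_inv_two_mul_pow_le_stirlingSeq_sq hk

theorem binomPMF_sq_mul_lt_one_of_pos {n k : ℕ} {p : ℝ} (hk : 0 < k) (hp1 : p < 1)
    (hlo : k < n * p) (hhi : n * p < k + 1) :
    binomPMF n p k ^ 2 * (2 * exp 1 * n * p * (1 - p)) < 1 := by
  have hkn : k < n := by
    have : (k : ℝ) < n := hlo.trans_le (mul_le_of_le_one_right n.cast_nonneg hp1.le)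
    exact_mod_cast this
  obtain ⟨M, rfl⟩ : ∃ M, n = k + M := ⟨n - k, by omega⟩
  have hM : 0 < M := by omega
  have hk' : (0 : ℝ) < k := by exact_mod_cast hk
  have hM' : (0 : ℝ) < M := by exact_mod_cast hM
  rw [binomPMF_sq_mul_eq hk.ne' hM.ne' p]
  push_cast at hlo hhi ⊢
  obtain ⟨t, ht⟩ : ∃ t : ℝ, t = (k + M) * p - k := ⟨_, rfl⟩
  have ht0 : 0 < t := by linarith
  have htM : t ≤ M := by nlinarith
  have hA : ((k : ℝ) + M) * p / k = 1 + t / k := by rw [ht]; field_simp; ring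
  have hB : ((k : ℝ) + M) * (1 - p) / M = 1 - t / M := by rw [ht]; field_simp; ring
  have hsk := stirlingSeq_pos hk.ne'
  have hratio : (stirlingSeq (k + M) / stirlingSeq M) ^ 2 ≤ 1 := by
    rw [div_pow, div_le_one (pow_pos (stirlingSeq_pos hM.ne') 2)]
    exact pow_le_pow_left₀ (stirlingSeq_pos (by omega)).le
      (stirlingSeq_le_stirlingSeq hM.ne' (Nat.le_add_left M k)) 2
  have hcore := exp_one_mul_pow_mul_pow_lt_stirlingSeq_sq hk ht0 htM
  rw [hA, hB]
  have hB0 : 0 ≤ 1 - t / M := by rwa [sub_nonneg, div_le_one hM']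
  calc (stirlingSeq (k + M) / stirlingSeq M) ^ 2 / stirlingSeq k ^ 2 *
        (exp 1 * (1 + t / k) ^ (2 * k + 1) * (1 - t / M) ^ (2 * M + 1))
      ≤ 1 / stirlingSeq k ^ 2 *
        (exp 1 * (1 + t / k) ^ (2 * k + 1) * (1 - t / M) ^ (2 * M + 1)) := by
        gcongr
    _ < 1 := by rwa [one_div_mul_eq_div, div_lt_one (by positivity)]

theorem binomPMF_zero_sq_mul_lt_one {n : ℕ} {p : ℝ} (hlo : 0 < n * p) (hhi : n * p < 1) :
    binomPMF n p 0 ^ 2 * (2 * exp 1 * n * p * (1 - p)) < 1 := by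
  have hn : (1 : ℝ) ≤ n := by
    rcases n.eq_zero_or_pos with rfl | hn
    · simp at hlo
    · exact_mod_cast hn
  obtain ⟨t, ht⟩ : ∃ t : ℝ, t = n * p := ⟨_, rfl⟩
  have hp : 1 - p = 1 - t / n := by rw [ht]; field_simp
  have htn : t ≤ n := by linarith
  have hexp : exp 1 * exp (-2 * t) * exp (2 * t - 1) = 1 := by
    rw [← exp_add, ← exp_add, exp_eq_one_iff]; ring
  have h2t : 2 * t ≤ exp (2 * t - 1) := by linarith [add_one_le_exp (2 * t - 1)]
  calc binomPMF n p 0 ^ 2 * (2 * exp 1 * n * p * (1 - p))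
      = 2 * exp 1 * t * (1 - t / n) ^ (2 * n + 1) := by
        rw [binomPMF, ← hp, ht]
        simp only [Nat.choose_zero_right, Nat.cast_one, pow_zero, Nat.sub_zero]
        ring
    _ < 2 * exp 1 * t * exp (-2 * t) := by
        have ht0 : 0 < t := ht ▸ hlo
        gcongr
        exact one_sub_div_pow_lt_exp ht0 htn
    _ = 2 * t / exp (2 * t - 1) := by
        rw [eq_div_iff (exp_pos _).ne']; linear_combination (2 * t) * hexp
    _ ≤ 1 := (div_le_one (exp_pos _)).2 h2t

theorem binomPMF_lt_sqrt {n k : ℕ} {p : ℝ} (hp1 : p < 1) (hlo : k < n * p)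
    (hhi : n * p < k + 1) :
    binomPMF n p k < √(1 / (2 * exp 1 * n * p * (1 - p))) := by
  have hnp : 0 < n * p := lt_of_le_of_lt k.cast_nonneg hlo
  have hp : 0 < p := pos_of_mul_pos_right hnp n.cast_nonneg
  have hn : (0 : ℝ) < n := pos_of_mul_pos_left hnp hp.le
  have hX : 0 < 2 * exp 1 * n * p * (1 - p) := by
    have := sub_pos.2 hp1
    positivity
  rw [lt_sqrt (binomPMF_nonneg hp.le hp1.le n k), lt_div_iff₀ hX]
  rcases k.eq_zero_or_pos with rfl | hk
  · exact binomPMF_zero_sq_mul_lt_one hnp (by simpa using hhi)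
  · exact binomPMF_sq_mul_lt_one_of_pos hk hp1 hlo hhi

end LocalBound

theorem binomQuantile_le_binomQuantile {n m : ℕ} {p q u : ℝ} (hu0 : 0 < u) (hu1 : u ≤ 1)
    (h : ∀ x, u ≤ binomCDF n p x → u ≤ binomCDF m q x) :
    binomQuantile m q u ≤ binomQuantile n p u := by
  refine csInf_le_csInf ⟨0, fun x hx => ?_⟩ ⟨n, ?_⟩ fun x hx => h x hx
  · by_contra hx0
    rw [mem_ofPred_eq, binomCDF_eq_zero_of_neg (not_le.1 hx0)] at hx
    linarith
  · rwa [mem_ofPred_eq, binomCDF_eq_binomPartialSum_floor n.cast_nonneg, Nat.floor_natCast,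
      binomPartialSum_eq_one_of_le le_rfl]

theorem binomPartialSum_lt_half_add_sqrt {n j : ℕ} {p : ℝ} (hp : 0 < p) (hp1 : p < 1)
    (hj : j < n * p) :
    binomPartialSum n p j < 1 / 2 + √(1 / (2 * exp 1 * n * p * (1 - p))) := by
  rcases le_or_gt ((j : ℝ) + 1) (n * p) with hj1 | hj1
  · have hn : (0 : ℝ) < n := pos_of_mul_pos_left (lt_of_le_of_lt j.cast_nonneg hj) hp.le
    have := sub_pos.2 hp1
    have : 0 < √(1 / (2 * exp 1 * n * p * (1 - p))) := by positivity
    linarith [binomPartialSum_le_half hp1.le hj1]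
  have hhalf : binomPartialSum n p j ≤ 1 / 2 + binomPMF n p j := by
    rcases j with _ | i
    · simp [binomPartialSum]
    · rw [binomPartialSum, sum_range_succ, ← binomPartialSum]
      have := binomPartialSum_le_half (n := n) (j := i) hp1.le (by push_cast at hj; linarith)
      linarith
  linarith [binomPMF_lt_sqrt hp1 hj hj1]

theorem binomPartialSum_le_binomPartialSum_of_concentrated {n m j : ℕ} {p q : ℝ} (hmn : m ≤ n)
    (hp : 0 < p) (hp1 : p < 1) (hq1 : q ≤ 1) (hμ : n * p = m * q)
    (hj : 1 / 2 + √(1 / (2 * exp 1 * n * p * (1 - p))) ≤ binomPartialSum n p j) :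
    binomPartialSum n p j ≤ binomPartialSum m q j := by
  rcases le_or_gt m j with hmj | hjm
  · rw [binomPartialSum_eq_one_of_le hmj]
    exact binomPartialSum_le_one hp.le hp1.le j
  rcases lt_or_ge (j : ℝ) (n * p) with hjμ | hμj
  · exact absurd hj (not_le.2 (binomPartialSum_lt_half_add_sqrt hp hp1 hjμ))
  have hm : (0 : ℝ) < m := by exact_mod_cast (show 0 < m by omega)
  have hn : (0 : ℝ) < n := by exact_mod_cast (show 0 < n by omega)
  have hchain := binomPartialSum_div_le_div_of_mean_le (by positivity) hμj
    (by rw [hμ]; exact mul_le_of_le_one_right hm.le hq1) hmn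
  rwa [mul_div_cancel_left₀ p hn.ne', hμ, mul_div_cancel_left₀ q hm.ne'] at hchain

theorem binomQuantile_ge_of_concentrated_general
    (n m : ℕ) (a : ℝ) (ha : 1 ≤ a)
    (hna : (n : ℝ) = a * m)
    (p : ℝ) (hp : 0 < p) (hap : a * p ≤ 1) :
    ∀ u : ℝ, 1 / 2 + Real.sqrt (1 / (2 * Real.exp 1 * n * p * (1 - p))) ≤ u → u ≤ 1 →
      binomQuantile n p u ≥ binomQuantile m (a * p) u := by
  intro u hu hu1
  rcases ha.eq_or_lt with rfl | ha
  · obtain rfl : n = m := by exact_mod_cast hna.trans (one_mul _)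
    rw [one_mul]
  have hp1 : p < 1 := by nlinarith
  have hmn : m ≤ n := by
    have : (m : ℝ) ≤ n := by rw [hna]; nlinarith [m.cast_nonneg (α := ℝ)]
    exact_mod_cast this
  have hμ : n * p = m * (a * p) := by rw [hna]; ring
  have hu0 : 0 < u := by linarith [sqrt_nonneg (1 / (2 * exp 1 * n * p * (1 - p)))]
  refine binomQuantile_le_binomQuantile hu0 hu1 fun x hx => ?_
  have hx0 : 0 ≤ x := not_lt.1 fun hx0 => by rw [binomCDF_eq_zero_of_neg hx0] at hx; linarith
  rw [binomCDF_eq_binomPartialSum_floor hx0] at hx ⊢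
  exact hx.trans
    (binomPartialSum_le_binomPartialSum_of_concentrated hmn hp hp1 hap hμ (hu.trans hx))

theorem binomQuantile_ge_of_concentrated
    (n m : ℕ) (hn : 0 < n) (hm : 0 < m) (a : ℝ) (ha : 1 ≤ a)
    (hna : (n : ℝ) = a * m)
    (p : ℝ) (hp : 0 < p) (hap : a * p ≤ 1) :
    ∀ u : ℝ, 1 / 2 + Real.sqrt (1 / (2 * Real.exp 1 * n * p * (1 - p))) ≤ u → u ≤ 1 →
      binomQuantile n p u ≥ binomQuantile m (a * p) u :=
  binomQuantile_ge_of_concentrated_general n m a ha hna p hp hap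
end
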